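/- Let α ∈ (0,1/2) and v ∈ C^α([0,1], ℝ^d). Suppose the non-anticipating dyadic Riemann sums I_k(v,dv)(t) := Σ_{m=1}^{2^k} v((m−1)2^{-k}) ⊗ (v(m2^{-k}∧t) − v((m−1)2^{-k}∧t)) converge uniformly as k → ∞. Then the dyadic quadratic covariations [v,v]_k(t) := Σ_m (v(m2^{-k}∧t) − v((m−1)2^{-k}∧t)) ⊗ (v(m2^{-k}∧t) − v((m−1)2^{-k}∧t)) also converge uniformly, and the limit [v,v] satisfies v^i(t)v^j(t) − v^i(0)v^j(0) = I(v^i,dv^j)(t) + I(v^j,dv^i)(t) + [v^i,v^j](t) for all t and i,j. -/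

import Mathlib

noncomputable section
open Set Filter

/-- The non-anticipating dyadic Riemann sum
`I_k(v^i, dv^j)(t) = ∑_m v^i((m-1)2^{-k}) (v^j(m2^{-k}∧t) - v^j((m-1)2^{-k}∧t))`. -/
def riemannSum {d : ℕ} (v : ℝ → Fin d → ℝ) (i j : Fin d) (k : ℕ) (t : ℝ) : ℝ :=
  ∑ m ∈ Finset.range (2 ^ k),
    v ((m : ℝ) / 2 ^ k) i *
      (v (min (((m : ℝ) + 1) / 2 ^ k) t) j - v (min ((m : ℝ) / 2 ^ k) t) j)

/-- The `k`-th dyadic quadratic covariation of the components `v^i, v^j`. -/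
def qvar {d : ℕ} (v : ℝ → Fin d → ℝ) (i j : Fin d) (k : ℕ) (t : ℝ) : ℝ :=
  ∑ m ∈ Finset.range (2 ^ k),
    (v (min (((m : ℝ) + 1) / 2 ^ k) t) i - v (min ((m : ℝ) / 2 ^ k) t) i) *
      (v (min (((m : ℝ) + 1) / 2 ^ k) t) j - v (min ((m : ℝ) / 2 ^ k) t) j)

/-!
Telescoping `v^i v^j` over the dyadic points stopped at `t` and expanding each increment as
`a'b' - ab = a (b' - b) + b (a' - a) + (a' - a)(b' - b)` gives, for every `k`,
`v^i(t)v^j(t) - v^i(0)v^j(0) = I_k(v^i,dv^j)(t) + I_k(v^j,dv^i)(t) + [v^i,v^j]_k(t)`.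
So `[v^i,v^j]_k` is a fixed function minus two uniformly convergent sequences.
-/

lemma tendstoUniformlyOn_const_seq {α β ι : Type*} [UniformSpace β] (g : α → β) (p : Filter ι)
    (s : Set α) : TendstoUniformlyOn (fun _ : ι => g) g p s :=
  fun _ hu => Eventually.of_forall fun _ _ _ => refl_mem_uniformity hu

lemma sum_range_dyadic_stopped_sub {G : Type*} [AddCommGroup G] (f : ℝ → G) (k : ℕ) {t : ℝ}
    (ht : t ∈ Icc (0 : ℝ) 1) :
    ∑ m ∈ Finset.range (2 ^ k),
      (f (min (((m : ℝ) + 1) / 2 ^ k) t) - f (min ((m : ℝ) / 2 ^ k) t)) = f t - f 0 := by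
  have h := Finset.sum_range_sub (fun n : ℕ => f (min ((n : ℝ) / 2 ^ k) t)) (2 ^ k)
  push_cast at h
  rwa [div_self (by positivity), zero_div, min_eq_right ht.2, min_eq_left ht.1] at h

/-- Past `t` the stopped increments vanish, so the left endpoint may be stopped as well. -/
lemma riemannSum_eq_sum_stopped {d : ℕ} (v : ℝ → Fin d → ℝ) (i j : Fin d) (k : ℕ) (t : ℝ) :
    riemannSum v i j k t = ∑ m ∈ Finset.range (2 ^ k),
      v (min ((m : ℝ) / 2 ^ k) t) i *
        (v (min (((m : ℝ) + 1) / 2 ^ k) t) j - v (min ((m : ℝ) / 2 ^ k) t) j) := by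
  refine Finset.sum_congr rfl fun m _ => ?_
  rcases le_or_gt ((m : ℝ) / 2 ^ k) t with h | h
  · rw [min_eq_left h]
  · have h' : t ≤ ((m : ℝ) + 1) / 2 ^ k := h.le.trans (by gcongr; linarith)
    rw [min_eq_right h.le, min_eq_right h', sub_self, mul_zero, mul_zero]

lemma riemannSum_add_riemannSum_add_qvar {d : ℕ} (v : ℝ → Fin d → ℝ) (i j : Fin d) (k : ℕ)
    {t : ℝ} (ht : t ∈ Icc (0 : ℝ) 1) :
    riemannSum v i j k t + riemannSum v j i k t + qvar v i j k t =
      v t i * v t j - v 0 i * v 0 j := by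
  rw [riemannSum_eq_sum_stopped, riemannSum_eq_sum_stopped, qvar, ← Finset.sum_add_distrib,
    ← Finset.sum_add_distrib, ← sum_range_dyadic_stopped_sub (fun s => v s i * v s j) k ht]
  exact Finset.sum_congr rfl fun m _ => by ring

theorem qvar_from_riemann_sums_general {d : ℕ}
    (v : ℝ → Fin d → ℝ)
    (I : Fin d → Fin d → ℝ → ℝ)
    (hI : ∀ i j : Fin d,
      TendstoUniformlyOn (fun k => riemannSum v i j k) (I i j) atTop (Icc 0 1)) :
    ∃ Q : Fin d → Fin d → ℝ → ℝ,
      (∀ i j : Fin d, TendstoUniformlyOn (fun k => qvar v i j k) (Q i j) atTop (Icc 0 1)) ∧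
      ∀ i j : Fin d, ∀ t ∈ Icc (0:ℝ) 1,
        v t i * v t j - v 0 i * v 0 j = I i j t + I j i t + Q i j t := by
  refine ⟨fun i j t => v t i * v t j - v 0 i * v 0 j - (I i j t + I j i t), fun i j => ?_,
    fun i j t _ => by ring⟩
  refine ((tendstoUniformlyOn_const_seq (fun t => v t i * v t j - v 0 i * v 0 j) atTop _).sub
    ((hI i j).add (hI j i))).congr (Eventually.of_forall fun k t ht => ?_)
  simp only [Pi.sub_apply, Pi.add_apply]
  linarith [riemannSum_add_riemannSum_add_qvar v i j k ht]

/-- If `v ∈ C^α([0,1],ℝ^d)`, `α ∈ (0,1/2)`, and the non-anticipating dyadic Riemann sums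
`I_k(v^i,dv^j)` converge uniformly to `I(v^i,dv^j)`, then the dyadic quadratic covariations
`[v^i,v^j]_k` converge uniformly to a limit `[v^i,v^j]` satisfying
`v^i(t)v^j(t) - v^i(0)v^j(0) = I(v^i,dv^j)(t) + I(v^j,dv^i)(t) + [v^i,v^j](t)`. -/
theorem qvar_from_riemann_sums {d : ℕ} (α : ℝ) (hα0 : 0 < α) (hα : α < 1 / 2)
    (v : ℝ → Fin d → ℝ) (K : ℝ)
    (hv : ∀ s ∈ Icc (0:ℝ) 1, ∀ t ∈ Icc (0:ℝ) 1, ‖v t - v s‖ ≤ K * |t - s| ^ α)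
    (I : Fin d → Fin d → ℝ → ℝ)
    (hI : ∀ i j : Fin d,
      TendstoUniformlyOn (fun k => riemannSum v i j k) (I i j) atTop (Icc 0 1)) :
    ∃ Q : Fin d → Fin d → ℝ → ℝ,
      (∀ i j : Fin d, TendstoUniformlyOn (fun k => qvar v i j k) (Q i j) atTop (Icc 0 1)) ∧
      ∀ i j : Fin d, ∀ t ∈ Icc (0:ℝ) 1,
        v t i * v t j - v 0 i * v 0 j = I i j t + I j i t + Q i j t :=
  qvar_from_riemann_sums_general v I hI
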